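/- arXiv:2109.12880 — 3 statements merged into one kernel-verified Lean document; each statement's English description precedes it below -/
import Mathlib

section
/- If c: R^d × R^d → R is continuous and bounded from below, and μ, ν are probability measures on R^d with OT_c(μ,ν) finite, then the infimum in the definition of OT_c(μ,ν) over couplings γ ∈ Π(μ,ν) is attained. -/
/-!
The couplings of two probability measures on Polish spaces form a set of probability measures
which is tight (its marginals are fixed, hence tight) and weakly closed (the marginal maps are
weakly continuous), hence weakly compact by Prokhorov's theorem. For a continuous cost `F ≥ 0`,
`γ ↦ ∫⁻ F ∂γ` is the supremum of the weakly continuous maps `γ ↦ ∫⁻ min F n ∂γ`, hence weakly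
lower semicontinuous, and so it attains its infimum on this nonempty compact set.
-/

open MeasureTheory ENNReal

/-- `γ` is a coupling of `μ` and `ν`. -/
def IsCoupling {d : ℕ} (γ : Measure (EuclideanSpace ℝ (Fin d) × EuclideanSpace ℝ (Fin d)))
    (μ ν : Measure (EuclideanSpace ℝ (Fin d))) : Prop :=
  γ.map Prod.fst = μ ∧ γ.map Prod.snd = ν

open BoundedContinuousFunction
open scoped NNReal

namespace MeasureTheory

namespace ProbabilityMeasure

theorem lowerSemicontinuous_lintegral {X : Type*} [TopologicalSpace X] [MeasurableSpace X]
    [OpensMeasurableSpace X] {f : X → ℝ≥0} (hf : Continuous f) :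
    LowerSemicontinuous fun μ : ProbabilityMeasure X ↦ ∫⁻ x, f x ∂μ := by
  let g (n : ℕ) : X →ᵇ ℝ≥0 := mkOfBound ⟨fun x ↦ min (f x) n, by fun_prop⟩ n fun x y ↦ by
    change dist (min (f x) n) (min (f y) n) ≤ n
    rw [NNReal.dist_eq]
    exact abs_sub_le_of_nonneg_of_le (NNReal.coe_nonneg _) (by exact_mod_cast min_le_right _ _)
      (NNReal.coe_nonneg _) (by exact_mod_cast min_le_right _ _)
  have hg_mono : Monotone fun n x ↦ (g n x : ℝ≥0∞) := fun m n hmn x ↦ by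
    simp only [g, mkOfBound_coe, ContinuousMap.coe_mk]
    gcongr
  have hg_iSup (x : X) : ⨆ n, (g n x : ℝ≥0∞) = f x := by
    refine le_antisymm (iSup_le fun n ↦ by simp [g]) ?_
    obtain ⟨n, hn⟩ := exists_nat_ge (f x)
    exact le_iSup_of_le n (by simp [g, hn])
  have hlintegral : (fun μ : ProbabilityMeasure X ↦ ∫⁻ x, f x ∂μ) =
      fun μ : ProbabilityMeasure X ↦ ⨆ n, ∫⁻ x, g n x ∂μ := by
    ext μ
    rw [← lintegral_iSup (fun n ↦ (g n).continuous.measurable.coe_nnreal_ennreal) hg_mono]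
    simp_rw [hg_iSup]
  rw [hlintegral]
  exact lowerSemicontinuous_iSup fun n ↦
    (continuous_lintegral_boundedContinuousFunction (g n)).lowerSemicontinuous

theorem isClosed_setOf_map_eq {Z W : Type*} [TopologicalSpace Z] [MeasurableSpace Z]
    [OpensMeasurableSpace Z] [TopologicalSpace W] [MeasurableSpace W] [BorelSpace W]
    [HasOuterApproxClosed W] {f : Z → W} (hf : Continuous f) (μ : Measure W)
    [IsProbabilityMeasure μ] :
    IsClosed {γ : ProbabilityMeasure Z | (γ : Measure Z).map f = μ} := by
  let ν : ProbabilityMeasure W := ⟨μ, ‹_›⟩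
  convert isClosed_eq (continuous_map hf) (continuous_const (y := ν)) using 1
  ext γ
  exact toMeasure_injective.eq_iff (a := γ.map hf.measurable.aemeasurable) (b := ν)

end ProbabilityMeasure

section Couplings

variable {X Y : Type*} [MeasurableSpace X] [MeasurableSpace Y]

def couplings (μ : Measure X) (ν : Measure Y) : Set (ProbabilityMeasure (X × Y)) :=
  {γ | (γ : Measure (X × Y)).fst = μ ∧ (γ : Measure (X × Y)).snd = ν}

variable (μ : Measure X) (ν : Measure Y) [IsProbabilityMeasure μ] [IsProbabilityMeasure ν]

theorem nonempty_couplings : (couplings μ ν).Nonempty :=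
  ⟨⟨μ.prod ν, inferInstance⟩, Measure.fst_prod, Measure.snd_prod⟩

variable [TopologicalSpace X] [PolishSpace X] [BorelSpace X] [TopologicalSpace Y] [PolishSpace Y]
  [BorelSpace Y]

theorem isClosed_couplings : IsClosed (couplings μ ν) :=
  (ProbabilityMeasure.isClosed_setOf_map_eq continuous_fst μ).inter
    (ProbabilityMeasure.isClosed_setOf_map_eq continuous_snd ν)

theorem isTightMeasureSet_couplings :
    IsTightMeasureSet {(γ : Measure (X × Y)) | γ ∈ couplings μ ν} := by
  refine .prodMk ((isTightMeasureSet_singleton (μ := μ)).subset ?_)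
    ((isTightMeasureSet_singleton (μ := ν)).subset ?_)
  · rintro _ ⟨_, ⟨γ, hγ, rfl⟩, rfl⟩
    exact hγ.1
  · rintro _ ⟨_, ⟨γ, hγ, rfl⟩, rfl⟩
    exact hγ.2

theorem isCompact_couplings : IsCompact (couplings μ ν) :=
  (isClosed_couplings μ ν).closure_eq ▸
    isCompact_closure_of_isTightMeasureSet (isTightMeasureSet_couplings μ ν)

theorem exists_lintegral_eq_iInf_couplings {F : X × Y → ℝ≥0} (hF : Continuous F) :
    ∃ γ : Measure (X × Y), (γ.fst = μ ∧ γ.snd = ν) ∧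
      ∫⁻ z, F z ∂γ = ⨅ (γ' : Measure (X × Y)) (_ : γ'.fst = μ ∧ γ'.snd = ν), ∫⁻ z, F z ∂γ' := by
  obtain ⟨γ₀, hγ₀, hmin⟩ := (ProbabilityMeasure.lowerSemicontinuous_lintegral hF)
    |>.lowerSemicontinuousOn _ |>.exists_isMinOn (nonempty_couplings μ ν) (isCompact_couplings μ ν)
  refine ⟨γ₀, hγ₀, le_antisymm (le_iInf₂ fun γ hγ ↦ ?_) (iInf₂_le (γ₀ : Measure (X × Y)) hγ₀)⟩
  have : IsProbabilityMeasure γ := ⟨by rw [← Measure.fst_univ, hγ.1, measure_univ]⟩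
  exact hmin (a := ⟨γ, this⟩) hγ

end Couplings

end MeasureTheory

theorem ot_infimum_attained_general (d : ℕ)
    (c : EuclideanSpace ℝ (Fin d) → EuclideanSpace ℝ (Fin d) → ℝ)
    (hc : Continuous fun z : EuclideanSpace ℝ (Fin d) × EuclideanSpace ℝ (Fin d) => c z.1 z.2)
    (m : ℝ)
    (μ ν : Measure (EuclideanSpace ℝ (Fin d)))
    [IsProbabilityMeasure μ] [IsProbabilityMeasure ν] :
    ∃ γ : Measure (EuclideanSpace ℝ (Fin d) × EuclideanSpace ℝ (Fin d)),
      IsCoupling γ μ ν ∧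
      (∫⁻ z, ENNReal.ofReal (c z.1 z.2 - m) ∂γ) =
        ⨅ (γ' : Measure (EuclideanSpace ℝ (Fin d) × EuclideanSpace ℝ (Fin d)))
          (_ : IsCoupling γ' μ ν), ∫⁻ z, ENNReal.ofReal (c z.1 z.2 - m) ∂γ' :=
  -- `ENNReal.ofReal x` is by definition `↑x.toNNReal`, and `IsCoupling` unfolds to `fst`/`snd`.
  exists_lintegral_eq_iInf_couplings μ ν (F := fun z ↦ (c z.1 z.2 - m).toNNReal) (by fun_prop)

/-- If `c` is continuous and bounded below by `m` and the optimal transport cost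
(written, after subtracting the lower bound `m`, as an `ℝ≥0∞`-valued infimum) is finite,
then the infimum over couplings is attained. -/
theorem ot_infimum_attained (d : ℕ)
    (c : EuclideanSpace ℝ (Fin d) → EuclideanSpace ℝ (Fin d) → ℝ)
    (hc : Continuous fun z : EuclideanSpace ℝ (Fin d) × EuclideanSpace ℝ (Fin d) => c z.1 z.2)
    (m : ℝ) (hm : ∀ x y, m ≤ c x y)
    (μ ν : Measure (EuclideanSpace ℝ (Fin d)))
    [IsProbabilityMeasure μ] [IsProbabilityMeasure ν]
    (hfin : (⨅ (γ : Measure (EuclideanSpace ℝ (Fin d) × EuclideanSpace ℝ (Fin d)))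
      (_ : IsCoupling γ μ ν), ∫⁻ z, ENNReal.ofReal (c z.1 z.2 - m) ∂γ) < ∞) :
    ∃ γ : Measure (EuclideanSpace ℝ (Fin d) × EuclideanSpace ℝ (Fin d)),
      IsCoupling γ μ ν ∧
      (∫⁻ z, ENNReal.ofReal (c z.1 z.2 - m) ∂γ) =
        ⨅ (γ' : Measure (EuclideanSpace ℝ (Fin d) × EuclideanSpace ℝ (Fin d)))
          (_ : IsCoupling γ' μ ν), ∫⁻ z, ENNReal.ofReal (c z.1 z.2 - m) ∂γ' :=
  ot_infimum_attained_general d c hc m μ ν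
end

section
/- For discrete measures μ = (1/N)∑_{i=1}^N δ_{x_i} and ν = (1/M)∑_{j=1}^M δ_{y_j} on R^d with continuous cost c bounded below, the dual optimal transport problem reduces to the finite-dimensional maximization OT_c(μ,ν) = max_{ψ∈R^M} (1/N)∑_{i=1}^N ψ^c(x_i) + (1/M)∑_{j=1}^M ψ_j, where ψ^c(x) = min_{j=1,...,M} (c(x,y_j) − ψ_j), and the maximum is attained. -/
open MeasureTheory ENNReal

/-- The uniform empirical measure of the points `v 0, …, v (N-1)`. -/
noncomputable def empirical {d N : ℕ} (v : Fin N → EuclideanSpace ℝ (Fin d)) :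
    Measure (EuclideanSpace ℝ (Fin d)) :=
  (N : ℝ≥0∞)⁻¹ • ∑ i, Measure.dirac (v i)

/-- The (real-valued) optimal transport cost `OT_c(μ,ν)` as the infimum of `∫ c dγ`
over couplings `γ` of `μ` and `ν`. -/
noncomputable def OTc {d : ℕ} (c : EuclideanSpace ℝ (Fin d) → EuclideanSpace ℝ (Fin d) → ℝ)
    (μ ν : Measure (EuclideanSpace ℝ (Fin d))) : ℝ :=
  sInf {r : ℝ | ∃ γ : Measure (EuclideanSpace ℝ (Fin d) × EuclideanSpace ℝ (Fin d)),
    γ.map Prod.fst = μ ∧ γ.map Prod.snd = ν ∧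
    Integrable (fun z => c z.1 z.2) γ ∧ r = ∫ z, c z.1 z.2 ∂γ}

open Finset

noncomputable def dualF (N M : ℕ) (cm : Fin N → Fin M → ℝ) (φ : Fin M → ℝ) : ℝ :=
  (N:ℝ)⁻¹ * ∑ i, (⨅ j, (cm i j - φ j)) + (M:ℝ)⁻¹ * ∑ j, φ j

lemma bdd_fin {M : ℕ} (f : Fin M → ℝ) : BddBelow (Set.range f) :=
  (Set.finite_range f).bddBelow

lemma dualF_continuous (N M : ℕ) (hM : 0 < M) (cm : Fin N → Fin M → ℝ) :
    Continuous (dualF N M cm) := by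
  have : Nonempty (Fin M) := ⟨⟨0, hM⟩⟩
  unfold dualF
  apply Continuous.add
  · apply continuous_const.mul
    apply continuous_finset_sum
    intro i _
    have : (fun φ : Fin M → ℝ => ⨅ j, (cm i j - φ j)) =
        fun φ => Finset.univ.inf' univ_nonempty (fun j => cm i j - φ j) := by
      funext φ; rw [Finset.inf'_univ_eq_ciInf]
    rw [this]
    exact Continuous.finset_inf'_apply _ fun j _ => continuous_const.sub (continuous_apply j)
  · exact continuous_const.mul (continuous_finset_sum _ fun j _ => continuous_apply j)

lemma dualF_shift (N M : ℕ) (hN : 0 < N) (hM : 0 < M) (cm : Fin N → Fin M → ℝ)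
    (φ : Fin M → ℝ) (t : ℝ) : dualF N M cm (fun j => φ j - t) = dualF N M cm φ := by
  have : Nonempty (Fin M) := ⟨⟨0, hM⟩⟩
  unfold dualF
  have h1 : ∀ i, (⨅ j, (cm i j - (φ j - t))) = (⨅ j, (cm i j - φ j)) + t := by
    intro i
    rw [ciInf_add (bdd_fin _)]
    congr 1; funext j; ring
  simp only [h1, Finset.sum_add_distrib, Finset.sum_const, Finset.sum_sub_distrib,
    Finset.card_univ, Fintype.card_fin]
  have hN' : (N:ℝ) ≠ 0 := Nat.cast_ne_zero.2 hN.ne'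
  have hM' : (M:ℝ) ≠ 0 := Nat.cast_ne_zero.2 hM.ne'
  field_simp
  ring

lemma dualF_exists_max (N M : ℕ) (hN : 0 < N) (hM : 0 < M) (cm : Fin N → Fin M → ℝ) :
    ∃ ψ : Fin M → ℝ, ∀ φ, dualF N M cm φ ≤ dualF N M cm ψ := by
  have hNM : Nonempty (Fin M) := ⟨⟨0, hM⟩⟩
  have hNN : Nonempty (Fin N) := ⟨⟨0, hN⟩⟩
  have hN' : (N:ℝ) ≠ 0 := Nat.cast_ne_zero.2 hN.ne'
  have hM' : (M:ℝ) ≠ 0 := Nat.cast_ne_zero.2 hM.ne'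
  have hMpos : (0:ℝ) < M := by positivity
  set Cmax : ℝ := Finset.univ.sup' univ_nonempty (fun j => (N:ℝ)⁻¹ * ∑ i, cm i j) with hCmax
  -- D 0 ≤ Cmax
  have hD0 : dualF N M cm 0 ≤ Cmax := by
    have : dualF N M cm 0 = (N:ℝ)⁻¹ * ∑ i, ⨅ j, (cm i j - (0:ℝ)) := by
      unfold dualF; simp
    rw [this]
    set j0 := Classical.arbitrary (Fin M)
    calc (N:ℝ)⁻¹ * ∑ i, ⨅ j, (cm i j - (0:ℝ))
        ≤ (N:ℝ)⁻¹ * ∑ i, cm i j0 := by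
          apply mul_le_mul_of_nonneg_left _ (by positivity)
          exact Finset.sum_le_sum fun i _ => (ciInf_le (bdd_fin _) j0).trans (by simp)
      _ ≤ Cmax := Finset.le_sup' (f := fun j => (N:ℝ)⁻¹ * ∑ i, cm i j) (Finset.mem_univ j0)
  set R : ℝ := M * (Cmax - dualF N M cm 0 + 1) with hR
  have hRpos : 0 ≤ R := by nlinarith
  -- upper bound: if all φ j ≤ 0 then D φ ≤ Cmax + M⁻¹ * ∑ φ
  have hub : ∀ φ : Fin M → ℝ, (∀ j, φ j ≤ 0) → (∃ j1, φ j1 = 0) →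
      dualF N M cm φ ≤ Cmax + (M:ℝ)⁻¹ * ∑ j, φ j := by
    rintro φ hle ⟨j1, hj1⟩
    unfold dualF
    gcongr
    calc (N:ℝ)⁻¹ * ∑ i, ⨅ j, (cm i j - φ j)
        ≤ (N:ℝ)⁻¹ * ∑ i, (cm i j1 - φ j1) := by
          apply mul_le_mul_of_nonneg_left _ (by positivity)
          exact Finset.sum_le_sum fun i _ => ciInf_le (bdd_fin _) j1
      _ = (N:ℝ)⁻¹ * ∑ i, cm i j1 := by rw [hj1]; simp
      _ ≤ Cmax := Finset.le_sup' (f := fun j => (N:ℝ)⁻¹ * ∑ i, cm i j) (Finset.mem_univ j1)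
  -- compact box
  obtain ⟨ψ, hψmem, hψmax⟩ := (isCompact_Icc (a := fun _ : Fin M => -R) (b := 0)).exists_isMaxOn
    (⟨0, Set.mem_Icc.2 ⟨fun j => by simpa using hRpos, le_refl _⟩⟩)
    (dualF_continuous N M hM cm).continuousOn
  refine ⟨ψ, fun φ => ?_⟩
  set t : ℝ := Finset.univ.sup' univ_nonempty φ with ht
  set φ' : Fin M → ℝ := fun j => φ j - t with hφ'
  have hφeq : dualF N M cm φ' = dualF N M cm φ := dualF_shift N M hN hM cm φ t
  have hle : ∀ j, φ' j ≤ 0 := fun j => sub_nonpos.2 (Finset.le_sup' _ (Finset.mem_univ j))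
  have hex : ∃ j1, φ' j1 = 0 := by
    obtain ⟨j1, _, hj1⟩ := Finset.exists_mem_eq_sup' (univ_nonempty) φ
    exact ⟨j1, by simp [hφ', ← hj1]; exact sub_self _⟩
  have h0mem : (0 : Fin M → ℝ) ∈ Set.Icc (fun _ : Fin M => -R) 0 :=
    Set.mem_Icc.2 ⟨fun j => by simpa using hRpos, le_refl _⟩
  by_cases hcase : ∀ j, -R ≤ φ' j
  · have : φ' ∈ Set.Icc (fun _ : Fin M => -R) 0 := Set.mem_Icc.2 ⟨hcase, hle⟩
    calc dualF N M cm φ = dualF N M cm φ' := hφeq.symm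
      _ ≤ dualF N M cm ψ := hψmax this
  · push_neg at hcase
    obtain ⟨k, hk⟩ := hcase
    have hsum : ∑ j, φ' j ≤ φ' k := by
      have : ∑ j, φ' j = φ' k + ∑ j ∈ Finset.univ.erase k, φ' j := by
        rw [← Finset.sum_erase_add _ _ (Finset.mem_univ k)]; ring
      rw [this]
      have : ∑ j ∈ Finset.univ.erase k, φ' j ≤ 0 :=
        Finset.sum_nonpos fun j _ => hle j
      linarith
    have h1 : dualF N M cm φ' ≤ Cmax + (M:ℝ)⁻¹ * ∑ j, φ' j := hub φ' hle hex
    have h2 : (M:ℝ)⁻¹ * ∑ j, φ' j < (M:ℝ)⁻¹ * (-R) := by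
      apply mul_lt_mul_of_pos_left (lt_of_le_of_lt hsum hk)
      positivity
    have h3 : (M:ℝ)⁻¹ * (-R) = -(Cmax - dualF N M cm 0 + 1) := by
      rw [hR]; field_simp
    have : dualF N M cm φ' < dualF N M cm 0 := by
      rw [h3] at h2; linarith
    calc dualF N M cm φ = dualF N M cm φ' := hφeq.symm
      _ ≤ dualF N M cm 0 := this.le
      _ ≤ dualF N M cm ψ := hψmax h0mem

lemma exists_good_bijection (N M : ℕ) (hN : 0 < N) (hM : 0 < M) (cm : Fin N → Fin M → ℝ)
    (ψ : Fin M → ℝ) (hmax : ∀ φ, dualF N M cm φ ≤ dualF N M cm ψ) :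
    ∃ f : Fin N × Fin M → Fin M × Fin N, Function.Bijective f ∧
      ∀ p, cm p.1 ((f p).1) - ψ ((f p).1) = ⨅ j, (cm p.1 j - ψ j) := by
  classical
  have hNM : Nonempty (Fin M) := ⟨⟨0, hM⟩⟩
  have hNN : Nonempty (Fin N) := ⟨⟨0, hN⟩⟩
  have hNpos : (0:ℝ) < N := by positivity
  have hMpos : (0:ℝ) < M := by positivity
  set g : Fin N → ℝ := fun i => ⨅ j, (cm i j - ψ j) with hg
  set A : Fin N → Finset (Fin M) := fun i => univ.filter (fun j => cm i j - ψ j = g i) with hA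
  have hgle : ∀ i j, g i ≤ cm i j - ψ j := fun i j => ciInf_le (bdd_fin _) j
  have hAmem : ∀ i j, j ∈ A i ↔ cm i j - ψ j = g i := by
    intro i j; simp [hA]
  set δ : ℝ := (univ : Finset (Fin N × Fin M)).inf' univ_nonempty
      (fun p => if p.2 ∈ A p.1 then 1 else cm p.1 p.2 - ψ p.2 - g p.1) with hδ
  have hδpos : 0 < δ := by
    rw [hδ, Finset.lt_inf'_iff]
    rintro ⟨i, j⟩ -
    dsimp only
    split_ifs with h
    · norm_num
    · have h1 := hgle i j
      have h2 : cm i j - ψ j ≠ g i := fun hh => h ((hAmem i j).2 hh)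
      have : g i < cm i j - ψ j := lt_of_le_of_ne h1 (Ne.symm h2)
      linarith
  set t : ℝ := min δ 1 with hT
  have ht0 : 0 < t := lt_min hδpos one_pos
  have htδ : t ≤ δ := min_le_left _ _
  -- key inequality
  have key : ∀ S : Finset (Fin M),
      (M:ℝ) * (univ.filter (fun i => A i ⊆ S)).card ≤ (N:ℝ) * S.card := by
    intro S
    set K := univ.filter (fun i => A i ⊆ S) with hK
    set φ : Fin M → ℝ := fun j => ψ j - (if j ∈ S then t else 0) with hφ
    have hlow : ∀ i, g i + (if A i ⊆ S then t else 0) ≤ ⨅ j, (cm i j - φ j) := by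
      intro i
      apply le_ciInf; intro j
      by_cases hAS : A i ⊆ S
      · rw [if_pos hAS]
        by_cases hjS : j ∈ S
        · have := hgle i j
          simp only [hφ, if_pos hjS]
          linarith
        · have hjA : j ∉ A i := fun h => hjS (hAS h)
          have hgap : δ ≤ cm i j - ψ j - g i := by
            have h := Finset.inf'_le (b := (i, j))
              (f := fun p : Fin N × Fin M =>
                if p.2 ∈ A p.1 then 1 else cm p.1 p.2 - ψ p.2 - g p.1)
              (Finset.mem_univ (i, j))
            rw [if_neg hjA] at h
            exact h
          simp only [hφ, if_neg hjS]
          linarith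
      · rw [if_neg hAS, add_zero]
        have h1 := hgle i j
        have h2 : (0:ℝ) ≤ if j ∈ S then t else 0 := by
          split_ifs; exacts [ht0.le, le_refl _]
        simp only [hφ]
        linarith
    have hsum1 : ∑ i, g i + t * K.card ≤ ∑ i, ⨅ j, (cm i j - φ j) := by
      have h1 : ∑ i, (g i + (if A i ⊆ S then t else 0)) ≤ ∑ i, ⨅ j, (cm i j - φ j) :=
        Finset.sum_le_sum fun i _ => hlow i
      have h2 : ∑ i, (if A i ⊆ S then t else 0) = t * K.card := by
        rw [← Finset.sum_filter, Finset.sum_const, hK]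
        simp [mul_comm]
      rw [Finset.sum_add_distrib, h2] at h1
      exact h1
    have hsum2 : ∑ j, φ j = ∑ j, ψ j - t * S.card := by
      simp only [hφ]
      rw [Finset.sum_sub_distrib]
      congr 1
      rw [← Finset.sum_filter, Finset.sum_const]
      simp [mul_comm]
    have hd : ((N:ℝ)⁻¹ * ∑ i, ⨅ j, (cm i j - ψ j)) + (M:ℝ)⁻¹ * ∑ j, ψ j
        + ((N:ℝ)⁻¹ * (t * K.card) - (M:ℝ)⁻¹ * (t * S.card)) ≤ dualF N M cm φ := by
      unfold dualF
      rw [hsum2]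
      have h1 : (N:ℝ)⁻¹ * (∑ i, g i + t * K.card) ≤ (N:ℝ)⁻¹ * ∑ i, ⨅ j, (cm i j - φ j) :=
        mul_le_mul_of_nonneg_left hsum1 (by positivity)
      have h2 : ∑ i, g i = ∑ i, ⨅ j, (cm i j - ψ j) := rfl
      rw [h2] at h1
      nlinarith [h1]
    have hcmp := hmax φ
    have hψval : dualF N M cm ψ
        = ((N:ℝ)⁻¹ * ∑ i, ⨅ j, (cm i j - ψ j)) + (M:ℝ)⁻¹ * ∑ j, ψ j := rfl
    rw [hψval] at hcmp
    have h7 : (N:ℝ)⁻¹ * (t * K.card) ≤ (M:ℝ)⁻¹ * (t * S.card) := by linarith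
    rw [inv_mul_eq_div, inv_mul_eq_div, div_le_div_iff₀ hNpos hMpos] at h7
    have h8 : t * ((M:ℝ) * K.card) ≤ t * ((N:ℝ) * S.card) := by nlinarith
    exact le_of_mul_le_mul_left h8 ht0
  have keyN : ∀ S : Finset (Fin M),
      M * (univ.filter (fun i => A i ⊆ S)).card ≤ N * S.card := by
    intro S
    have := key S
    exact_mod_cast this
  -- Hall's condition for the blown-up bipartite graph
  set T : Fin N × Fin M → Finset (Fin M × Fin N) := fun p => (A p.1) ×ˢ univ with hT'
  have hall : ∀ s : Finset (Fin N × Fin M), s.card ≤ (s.biUnion T).card := by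
    intro s
    set R := s.image Prod.fst with hR
    set U := R.biUnion A with hU
    have h1 : s ⊆ R ×ˢ (univ : Finset (Fin M)) := fun p hp =>
      Finset.mem_product.2 ⟨Finset.mem_image_of_mem _ hp, Finset.mem_univ _⟩
    have h2 : s.card ≤ R.card * M := by
      simpa [Finset.card_product] using Finset.card_le_card h1
    have h3 : U ×ˢ (univ : Finset (Fin N)) ⊆ s.biUnion T := by
      rintro ⟨j, b⟩ hjb
      obtain ⟨hj, -⟩ := Finset.mem_product.1 hjb
      obtain ⟨i, hiR, hij⟩ := Finset.mem_biUnion.1 hj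
      obtain ⟨p, hps, hpi⟩ := Finset.mem_image.1 hiR
      refine Finset.mem_biUnion.2 ⟨p, hps, Finset.mem_product.2 ⟨?_, Finset.mem_univ _⟩⟩
      rw [hpi]; exact hij
    have h4 : U.card * N ≤ (s.biUnion T).card := by
      simpa [Finset.card_product] using Finset.card_le_card h3
    have h5 : R ⊆ univ.filter (fun i => A i ⊆ U) := fun i hi =>
      Finset.mem_filter.2 ⟨Finset.mem_univ _, fun j hj => Finset.mem_biUnion.2 ⟨i, hi, hj⟩⟩
    have h6 : R.card ≤ (univ.filter (fun i => A i ⊆ U)).card := Finset.card_le_card h5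
    calc s.card ≤ R.card * M := h2
      _ ≤ (univ.filter (fun i => A i ⊆ U)).card * M := Nat.mul_le_mul_right _ h6
      _ = M * (univ.filter (fun i => A i ⊆ U)).card := mul_comm _ _
      _ ≤ N * U.card := keyN U
      _ = U.card * N := mul_comm _ _
      _ ≤ (s.biUnion T).card := h4
  obtain ⟨f, hfinj, hfmem⟩ := (Finset.all_card_le_biUnion_card_iff_exists_injective T).1 hall
  have hbij : Function.Bijective f :=
    (Fintype.bijective_iff_injective_and_card f).2 ⟨hfinj, by simp [mul_comm]⟩
  refine ⟨f, hbij, fun p => ?_⟩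
  have hmem := hfmem p
  rw [hT'] at hmem
  have := (Finset.mem_product.1 hmem).1
  exact (hAmem p.1 _).1 this

lemma integrable_dirac'' {α E : Type*} [MeasurableSpace α] [MeasurableSingletonClass α]
    [NormedAddCommGroup E] (f : α → E) (a : α) : Integrable f (Measure.dirac a) :=
  (integrable_const (f a)).congr (MeasureTheory.ae_eq_dirac f).symm

lemma map_finset_sum' {α β ι : Type*} [MeasurableSpace α] [MeasurableSpace β]
    (s : Finset ι) (μ : ι → Measure α) {h : α → β} (hf : Measurable h) :
    (∑ i ∈ s, μ i).map h = ∑ i ∈ s, (μ i).map h := by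
  classical
  induction s using Finset.cons_induction with
  | empty => simp
  | cons a s ha ih => rw [Finset.sum_cons, Measure.map_add _ _ hf, ih, Finset.sum_cons]

lemma empirical_apply_compl_range {d N : ℕ} (v : Fin N → EuclideanSpace ℝ (Fin d)) :
    empirical v (Set.range v)ᶜ = 0 := by
  rw [empirical, Measure.smul_apply, Measure.finset_sum_apply]
  have : ∀ i : Fin N, Measure.dirac (v i) (Set.range v)ᶜ = 0 := by
    intro i
    rw [Measure.dirac_apply]
    simp [Set.indicator_of_notMem, Set.mem_range_self]
  simp [this]

lemma empirical_univ {d N : ℕ} (hN : 0 < N) (v : Fin N → EuclideanSpace ℝ (Fin d)) :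
    empirical v Set.univ = 1 := by
  rw [empirical, Measure.smul_apply, Measure.finset_sum_apply]
  simp only [measure_univ, Finset.sum_const, Finset.card_univ, Fintype.card_fin, nsmul_eq_mul,
    mul_one, smul_eq_mul]
  exact ENNReal.inv_mul_cancel (by exact_mod_cast hN.ne') (ENNReal.natCast_ne_top N)

lemma integral_empirical {d N : ℕ} (v : Fin N → EuclideanSpace ℝ (Fin d))
    (f : EuclideanSpace ℝ (Fin d) → ℝ) :
    ∫ u, f u ∂(empirical v) = (N:ℝ)⁻¹ * ∑ i, f (v i) := by
  rw [empirical, integral_smul_measure,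
    integral_finset_sum_measure (fun i _ => integrable_dirac'' f (v i))]
  simp [ENNReal.toReal_inv, integral_dirac]

example {d N : ℕ} (v : Fin N → EuclideanSpace ℝ (Fin d))
    (γ : Measure ((EuclideanSpace ℝ (Fin d)) × (EuclideanSpace ℝ (Fin d))))
    (h1 : γ.map Prod.fst = empirical v) :
    ∀ᵐ z ∂γ, z.1 ∈ Set.range v := by
  have hms : MeasurableSet (Set.range v)ᶜ := ((Set.finite_range v).measurableSet).compl
  have : γ (Prod.fst ⁻¹' (Set.range v)ᶜ) = 0 := by
    rw [← Measure.map_apply measurable_fst hms, h1, empirical_apply_compl_range]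
  rw [ae_iff]
  convert this using 2
  rfl

lemma coupling_exists {d N M : ℕ} (hN : 0 < N) (hM : 0 < M)
    (x : Fin N → EuclideanSpace ℝ (Fin d)) (y : Fin M → EuclideanSpace ℝ (Fin d))
    (c : EuclideanSpace ℝ (Fin d) → EuclideanSpace ℝ (Fin d) → ℝ)
    (ψ : Fin M → ℝ) (f : Fin N × Fin M → Fin M × Fin N) (hbij : Function.Bijective f)
    (hopt : ∀ p, c (x p.1) (y ((f p).1)) - ψ ((f p).1) = ⨅ j, (c (x p.1) (y j) - ψ j)) :
    ∃ γ : Measure ((EuclideanSpace ℝ (Fin d)) × (EuclideanSpace ℝ (Fin d))),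
      γ.map Prod.fst = empirical x ∧ γ.map Prod.snd = empirical y ∧
      Integrable (fun z => c z.1 z.2) γ ∧
      ∫ z, c z.1 z.2 ∂γ =
        (N:ℝ)⁻¹ * ∑ i, (⨅ j, (c (x i) (y j) - ψ j)) + (M:ℝ)⁻¹ * ∑ j, ψ j := by
  classical
  have hN0 : (N:ℝ≥0∞) ≠ 0 := by exact_mod_cast hN.ne'
  have hM0 : (M:ℝ≥0∞) ≠ 0 := by exact_mod_cast hM.ne'
  have hNt : (N:ℝ≥0∞) ≠ ⊤ := ENNReal.natCast_ne_top N
  have hMt : (M:ℝ≥0∞) ≠ ⊤ := ENNReal.natCast_ne_top M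
  have hNr : (N:ℝ) ≠ 0 := Nat.cast_ne_zero.2 hN.ne'
  have hMr : (M:ℝ) ≠ 0 := Nat.cast_ne_zero.2 hM.ne'
  set γ : Measure ((EuclideanSpace ℝ (Fin d)) × (EuclideanSpace ℝ (Fin d))) :=
    ((N:ℝ≥0∞) * M)⁻¹ • ∑ p : Fin N × Fin M, Measure.dirac (x p.1, y ((f p).1)) with hγ
  have hcoe1 : ((N:ℝ≥0∞) * M)⁻¹ * M = (N:ℝ≥0∞)⁻¹ := by
    rw [ENNReal.mul_inv (Or.inl hN0) (Or.inl hNt), mul_assoc,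
      ENNReal.inv_mul_cancel hM0 hMt, mul_one]
  have hcoe2 : ((N:ℝ≥0∞) * M)⁻¹ * N = (M:ℝ≥0∞)⁻¹ := by
    rw [ENNReal.mul_inv (Or.inl hN0) (Or.inl hNt), mul_comm ((N:ℝ≥0∞)⁻¹) _, mul_assoc,
      ENNReal.inv_mul_cancel hN0 hNt, mul_one]
  have e := Equiv.ofBijective f hbij
  refine ⟨γ, ?_, ?_, ?_, ?_⟩
  · rw [hγ, Measure.map_smul, map_finset_sum' _ _ measurable_fst]
    have h1 : ∀ p : Fin N × Fin M,
        (Measure.dirac (x p.1, y ((f p).1))).map Prod.fst = Measure.dirac (x p.1) := fun p =>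
      Measure.map_dirac' measurable_fst _
    simp only [h1]
    rw [Fintype.sum_prod_type]
    simp only [Finset.sum_const, Finset.card_univ, Fintype.card_fin]
    rw [empirical]
    rw [← Finset.smul_sum (r := M)]
    rw [← Nat.cast_smul_eq_nsmul ℝ≥0∞ M, smul_smul, hcoe1]
  · rw [hγ, Measure.map_smul, map_finset_sum' _ _ measurable_snd]
    have h1 : ∀ p : Fin N × Fin M,
        (Measure.dirac (x p.1, y ((f p).1))).map Prod.snd = Measure.dirac (y ((f p).1)) :=
      fun p => Measure.map_dirac' measurable_snd _
    simp only [h1]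
    have h2 : ∑ p : Fin N × Fin M, Measure.dirac (y ((f p).1))
        = ∑ q : Fin M × Fin N, Measure.dirac (y q.1) :=
      Fintype.sum_equiv (Equiv.ofBijective f hbij) _ _ (fun p => rfl)
    rw [h2, Fintype.sum_prod_type]
    simp only [Finset.sum_const, Finset.card_univ, Fintype.card_fin]
    rw [empirical, ← Finset.smul_sum (r := N), ← Nat.cast_smul_eq_nsmul ℝ≥0∞ N, smul_smul, hcoe2]
  · refine Integrable.smul_measure ?_ (by simp [ENNReal.mul_eq_top]; exact ⟨hN.ne', hM.ne'⟩)
    exact integrable_finset_sum_measure.2 fun p _ => integrable_dirac'' _ _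
  · rw [hγ, integral_smul_measure,
      integral_finset_sum_measure (fun p _ => integrable_dirac'' _ _)]
    simp only [integral_dirac]
    have hval : ∀ p : Fin N × Fin M,
        c (x p.1) (y ((f p).1)) = (⨅ j, (c (x p.1) (y j) - ψ j)) + ψ ((f p).1) := by
      intro p; have := hopt p; linarith
    have hsum : ∑ p : Fin N × Fin M, c (x p.1) (y ((f p).1))
        = (M:ℝ) * ∑ i, (⨅ j, (c (x i) (y j) - ψ j)) + (N:ℝ) * ∑ j, ψ j := by
      calc ∑ p : Fin N × Fin M, c (x p.1) (y ((f p).1))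
          = ∑ p : Fin N × Fin M, ((⨅ j, (c (x p.1) (y j) - ψ j)) + ψ ((f p).1)) := by
            exact Finset.sum_congr rfl fun p _ => hval p
        _ = ∑ p : Fin N × Fin M, (⨅ j, (c (x p.1) (y j) - ψ j))
            + ∑ p : Fin N × Fin M, ψ ((f p).1) := Finset.sum_add_distrib
        _ = (M:ℝ) * ∑ i, (⨅ j, (c (x i) (y j) - ψ j)) + (N:ℝ) * ∑ j, ψ j := by
            congr 1
            · rw [Fintype.sum_prod_type]
              simp [Finset.sum_const, mul_comm, Finset.mul_sum]
            · rw [Fintype.sum_equiv (Equiv.ofBijective f hbij)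
                (fun p => ψ ((f p).1)) (fun q => ψ q.1) (fun p => rfl), Fintype.sum_prod_type]
              simp [Finset.sum_const, mul_comm, Finset.mul_sum, Finset.sum_mul]
    rw [hsum]
    have htr : (((N:ℝ≥0∞) * M)⁻¹).toReal = ((N:ℝ) * M)⁻¹ := by
      simp [ENNReal.toReal_inv]
    rw [htr, smul_eq_mul]
    field_simp

lemma weak_duality {d N M : ℕ} (hN : 0 < N) (hM : 0 < M)
    (x : Fin N → EuclideanSpace ℝ (Fin d)) (y : Fin M → EuclideanSpace ℝ (Fin d))
    (c : EuclideanSpace ℝ (Fin d) → EuclideanSpace ℝ (Fin d) → ℝ)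
    (hc : Continuous fun z : EuclideanSpace ℝ (Fin d) × EuclideanSpace ℝ (Fin d) => c z.1 z.2)
    (φ : Fin M → ℝ) (γ : Measure ((EuclideanSpace ℝ (Fin d)) × (EuclideanSpace ℝ (Fin d))))
    (h1 : γ.map Prod.fst = empirical x) (h2 : γ.map Prod.snd = empirical y)
    (hint : Integrable (fun z => c z.1 z.2) γ) :
    (N:ℝ)⁻¹ * ∑ i, (⨅ j, (c (x i) (y j) - φ j)) + (M:ℝ)⁻¹ * ∑ j, φ j ≤
      ∫ z, c z.1 z.2 ∂γ := by
  classical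
  have hNM : Nonempty (Fin M) := ⟨⟨0, hM⟩⟩
  have hNN : Nonempty (Fin N) := ⟨⟨0, hN⟩⟩
  -- γ is a probability measure
  have hprob : IsProbabilityMeasure γ := by
    constructor
    have := congrArg (fun μ : Measure (EuclideanSpace ℝ (Fin d)) => μ Set.univ) h1
    rw [Measure.map_apply measurable_fst MeasurableSet.univ] at this
    simpa [empirical_univ hN x] using this
  -- the column potential as a genuine function on E
  set T : Finset (EuclideanSpace ℝ (Fin d)) := Finset.univ.image y with hT
  set val : EuclideanSpace ℝ (Fin d) → ℝ := fun v =>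
    if h : (Finset.univ.filter (fun k => y k = v)).Nonempty
    then (Finset.univ.filter (fun k => y k = v)).sup' h φ else 0 with hval
  set G : EuclideanSpace ℝ (Fin d) → ℝ := fun v => ∑ t ∈ T, if v = t then val t else 0 with hG
  have hGy : ∀ j, G (y j) = val (y j) := by
    intro j
    rw [hG]
    simp only
    rw [Finset.sum_ite_eq T (y j) (fun t => val t)]
    simp [hT, Finset.mem_image]
  have hvy : ∀ j, ∃ k, y k = y j ∧ val (y j) = φ k := by
    intro j
    have hne : (Finset.univ.filter (fun k => y k = y j)).Nonempty :=
      ⟨j, Finset.mem_filter.2 ⟨Finset.mem_univ _, rfl⟩⟩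
    obtain ⟨k, hk, hk2⟩ := Finset.exists_mem_eq_sup' hne φ
    refine ⟨k, (Finset.mem_filter.1 hk).2, ?_⟩
    rw [hval]; simp only [dif_pos hne]; exact hk2
  have hφv : ∀ j, φ j ≤ val (y j) := by
    intro j
    have hne : (Finset.univ.filter (fun k => y k = y j)).Nonempty :=
      ⟨j, Finset.mem_filter.2 ⟨Finset.mem_univ _, rfl⟩⟩
    rw [hval]; simp only [dif_pos hne]
    exact Finset.le_sup' (f := φ)
      (show j ∈ Finset.univ.filter (fun k => y k = y j) from
        Finset.mem_filter.2 ⟨Finset.mem_univ _, rfl⟩)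
  set F : EuclideanSpace ℝ (Fin d) → ℝ := fun u => ⨅ j, (c u (y j) - G (y j)) with hF
  have hFle : ∀ u j, F u ≤ c u (y j) - G (y j) := fun u j => ciInf_le ((Set.finite_range _).bddBelow) j
  have hFlow : ∀ u, (⨅ j, (c u (y j) - φ j)) ≤ F u := by
    intro u
    apply le_ciInf
    intro j
    obtain ⟨k, hk1, hk2⟩ := hvy j
    have : c u (y j) - G (y j) = c u (y k) - φ k := by rw [hGy, hk2, hk1]
    rw [this]
    exact ciInf_le ((Set.finite_range _).bddBelow) k
  have hFcont : Continuous F := by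
    have : F = fun u => Finset.univ.inf' Finset.univ_nonempty
        (fun j => c u (y j) - G (y j)) := by
      funext u; rw [hF]; rw [Finset.inf'_univ_eq_ciInf]
    rw [this]
    exact Continuous.finset_inf'_apply _ fun j _ =>
      (hc.comp (continuous_id.prodMk continuous_const)).sub continuous_const
  have hGmeas : Measurable G := by
    rw [hG]
    apply Finset.measurable_sum
    intro t _
    exact Measurable.ite (measurableSet_eq) measurable_const measurable_const
  -- a.e. membership in ranges
  have hax : ∀ᵐ z ∂γ, z.1 ∈ Set.range x := by
    have hms : MeasurableSet (Set.range x)ᶜ := ((Set.finite_range x).measurableSet).compl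
    have h0 : γ (Prod.fst ⁻¹' (Set.range x)ᶜ) = 0 := by
      rw [← Measure.map_apply measurable_fst hms, h1, empirical_apply_compl_range]
    rw [ae_iff]; convert h0 using 2; rfl
  have hay : ∀ᵐ z ∂γ, z.2 ∈ Set.range y := by
    have hms : MeasurableSet (Set.range y)ᶜ := ((Set.finite_range y).measurableSet).compl
    have h0 : γ (Prod.snd ⁻¹' (Set.range y)ᶜ) = 0 := by
      rw [← Measure.map_apply measurable_snd hms, h2, empirical_apply_compl_range]
    rw [ae_iff]; convert h0 using 2; rfl
  -- integrability
  set B1 : ℝ := Finset.univ.sup' Finset.univ_nonempty (fun i => |F (x i)|) with hB1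
  set B2 : ℝ := Finset.univ.sup' Finset.univ_nonempty (fun j => |G (y j)|) with hB2
  have hIF : Integrable (fun z : (EuclideanSpace ℝ (Fin d)) × (EuclideanSpace ℝ (Fin d)) =>
      F z.1) γ := by
    refine Integrable.mono' (integrable_const B1)
      ((hFcont.measurable.comp measurable_fst).aestronglyMeasurable) ?_
    filter_upwards [hax] with z hz
    obtain ⟨i, hi⟩ := hz
    rw [Real.norm_eq_abs, ← hi]
    exact Finset.le_sup' (f := fun i => |F (x i)|) (Finset.mem_univ i)
  have hIG : Integrable (fun z : (EuclideanSpace ℝ (Fin d)) × (EuclideanSpace ℝ (Fin d)) =>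
      G z.2) γ := by
    refine Integrable.mono' (integrable_const B2)
      ((hGmeas.comp measurable_snd).aestronglyMeasurable) ?_
    filter_upwards [hay] with z hz
    obtain ⟨j, hj⟩ := hz
    rw [Real.norm_eq_abs, ← hj]
    exact Finset.le_sup' (f := fun j => |G (y j)|) (Finset.mem_univ j)
  -- pointwise inequality a.e.
  have hpt : ∀ᵐ z ∂γ, F z.1 + G z.2 ≤ c z.1 z.2 := by
    filter_upwards [hay] with z hz
    obtain ⟨j, hj⟩ := hz
    have := hFle z.1 j
    rw [hj] at this
    linarith
  -- put the integrals together
  have hle1 : ∫ z, (F z.1 + G z.2) ∂γ ≤ ∫ z, c z.1 z.2 ∂γ :=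
    integral_mono_ae (hIF.add hIG) hint hpt
  rw [integral_add hIF hIG] at hle1
  have hintF : ∫ z, F z.1 ∂γ = (N:ℝ)⁻¹ * ∑ i, F (x i) := by
    have := integral_map (μ := γ) measurable_fst.aemeasurable
      (f := F) (hFcont.stronglyMeasurable.aestronglyMeasurable)
    rw [h1, integral_empirical] at this
    exact this.symm
  have hintG : ∫ z, G z.2 ∂γ = (M:ℝ)⁻¹ * ∑ j, G (y j) := by
    have := integral_map (μ := γ) measurable_snd.aemeasurable
      (f := G) (hGmeas.aestronglyMeasurable)
    rw [h2, integral_empirical] at this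
    exact this.symm
  rw [hintF, hintG] at hle1
  refine le_trans ?_ hle1
  have e1 : (N:ℝ)⁻¹ * ∑ i, (⨅ j, (c (x i) (y j) - φ j)) ≤ (N:ℝ)⁻¹ * ∑ i, F (x i) := by
    apply mul_le_mul_of_nonneg_left _ (by positivity)
    exact Finset.sum_le_sum fun i _ => hFlow (x i)
  have e2 : (M:ℝ)⁻¹ * ∑ j, φ j ≤ (M:ℝ)⁻¹ * ∑ j, G (y j) := by
    apply mul_le_mul_of_nonneg_left _ (by positivity)
    refine Finset.sum_le_sum fun j _ => ?_
    rw [hGy j]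
    exact hφv j
  linarith

/-- For discrete uniform measures, the dual optimal transport problem reduces to a
finite-dimensional maximization over `ψ ∈ ℝ^M`, and the maximum is attained. -/
theorem discrete_dual_formulation (d N M : ℕ) (hN : 0 < N) (hM : 0 < M)
    (x : Fin N → EuclideanSpace ℝ (Fin d)) (y : Fin M → EuclideanSpace ℝ (Fin d))
    (c : EuclideanSpace ℝ (Fin d) → EuclideanSpace ℝ (Fin d) → ℝ)
    (hc : Continuous fun z : EuclideanSpace ℝ (Fin d) × EuclideanSpace ℝ (Fin d) => c z.1 z.2)
    (m : ℝ) (hm : ∀ u v, m ≤ c u v) :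
    ∃ ψ : Fin M → ℝ,
      OTc c (empirical x) (empirical y) =
        (N : ℝ)⁻¹ * ∑ i, (⨅ j, (c (x i) (y j) - ψ j)) + (M : ℝ)⁻¹ * ∑ j, ψ j ∧
      ∀ φ : Fin M → ℝ,
        (N : ℝ)⁻¹ * ∑ i, (⨅ j, (c (x i) (y j) - φ j)) + (M : ℝ)⁻¹ * ∑ j, φ j ≤
          OTc c (empirical x) (empirical y) := by
  classical
  obtain ⟨ψ, hψ⟩ := dualF_exists_max N M hN hM (fun i j => c (x i) (y j))
  obtain ⟨f, hbij, hopt⟩ := exists_good_bijection N M hN hM (fun i j => c (x i) (y j)) ψ hψ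
  obtain ⟨γ, hγ1, hγ2, hγ3, hγ4⟩ := coupling_exists hN hM x y c ψ f hbij hopt
  set D : ℝ := (N:ℝ)⁻¹ * ∑ i, (⨅ j, (c (x i) (y j) - ψ j)) + (M:ℝ)⁻¹ * ∑ j, ψ j with hD
  set S : Set ℝ := {r : ℝ |
    ∃ γ : Measure (EuclideanSpace ℝ (Fin d) × EuclideanSpace ℝ (Fin d)),
      γ.map Prod.fst = empirical x ∧ γ.map Prod.snd = empirical y ∧
      Integrable (fun z => c z.1 z.2) γ ∧ r = ∫ z, c z.1 z.2 ∂γ} with hS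
  have hmem : D ∈ S := ⟨γ, hγ1, hγ2, hγ3, hγ4.symm⟩
  have hlb : ∀ r ∈ S, D ≤ r := by
    rintro r ⟨γ', m1, m2, mi, rfl⟩
    exact weak_duality hN hM x y c hc ψ γ' m1 m2 mi
  have hOT : OTc c (empirical x) (empirical y) = D := by
    rw [OTc]
    exact le_antisymm (csInf_le ⟨D, hlb⟩ hmem) (le_csInf ⟨D, hmem⟩ hlb)
  refine ⟨ψ, hOT, fun φ => ?_⟩
  rw [hOT]
  exact hψ φ
end

section
/- Strong duality for discrete optimal transport: for μ = (1/N)∑_i δ_{x_i}, ν = (1/M)∑_j δ_{y_j} and any cost matrix C_{ij} = c(x_i, y_j), the linear program min{∑_{ij} γ_{ij} C_{ij} : γ_{ij} ≥ 0, ∑_j γ_{ij} = 1/N, ∑_i γ_{ij} = 1/M} equals max{(1/N)∑_i φ_i + (1/M)∑_j ψ_j : φ_i + ψ_j ≤ C_{ij} for all i,j}, and moreover at the optimum one may take φ_i = ψ^c(x_i) = min_j (C_{ij} − ψ_j). -/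
open Finset

namespace DSD

variable (N M : ℕ) (C : Fin N → Fin M → ℝ)

def PS : Set ℝ := {r : ℝ | ∃ γ : Fin N → Fin M → ℝ,
    (∀ i j, 0 ≤ γ i j) ∧ (∀ i, ∑ j, γ i j = 1 / N) ∧ (∀ j, ∑ i, γ i j = 1 / M) ∧
    r = ∑ i, ∑ j, γ i j * C i j}

def DS : Set ℝ := {r : ℝ | ∃ φ : Fin N → ℝ, ∃ ψ : Fin M → ℝ,
    (∀ i j, φ i + ψ j ≤ C i j) ∧
    r = (N : ℝ)⁻¹ * ∑ i, φ i + (M : ℝ)⁻¹ * ∑ j, ψ j}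

variable {N M C}

lemma PS_nonempty (hN : 0 < N) (hM : 0 < M) : (PS N M C).Nonempty := by
  have hNne : (N:ℝ) ≠ 0 := Nat.cast_ne_zero.2 hN.ne'
  have hMne : (M:ℝ) ≠ 0 := Nat.cast_ne_zero.2 hM.ne'
  refine ⟨_, fun _ _ => 1/((N:ℝ)*M), fun _ _ => by positivity, fun i => ?_, fun j => ?_, rfl⟩
  · rw [Finset.sum_const, Finset.card_univ, Fintype.card_fin, nsmul_eq_mul]
    field_simp
  · rw [Finset.sum_const, Finset.card_univ, Fintype.card_fin, nsmul_eq_mul]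
    field_simp

lemma DS_nonempty (hN : 0 < N) (hM : 0 < M) : (DS N M C).Nonempty := by
  have hMuniv : (Finset.univ : Finset (Fin M)).Nonempty := ⟨⟨0, hM⟩, Finset.mem_univ _⟩
  refine ⟨_, fun i => Finset.univ.inf' hMuniv (C i), 0, fun i j => ?_, rfl⟩
  simpa only [Pi.zero_apply, add_zero] using Finset.inf'_le (C i) (Finset.mem_univ j)

lemma weak (hN : 0 < N) (hM : 0 < M) {r q : ℝ}
    (hr : r ∈ DS N M C) (hq : q ∈ PS N M C) : r ≤ q := by
  obtain ⟨φ, ψ, hfe, rfl⟩ := hr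
  obtain ⟨γ, hpos, hrow, hcol, rfl⟩ := hq
  have h1 : ∀ i, (∑ j, γ i j) = (N:ℝ)⁻¹ := fun i => by rw [hrow i, one_div]
  have h2 : ∀ j, (∑ i, γ i j) = (M:ℝ)⁻¹ := fun j => by rw [hcol j, one_div]
  have key : (N : ℝ)⁻¹ * ∑ i, φ i + (M : ℝ)⁻¹ * ∑ j, ψ j
      = ∑ i, ∑ j, (γ i j * φ i + γ i j * ψ j) := by
    have e1 : (N : ℝ)⁻¹ * ∑ i, φ i = ∑ i, ∑ j, γ i j * φ i := by
      rw [Finset.mul_sum]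
      refine Finset.sum_congr rfl fun i _ => ?_
      rw [← Finset.sum_mul, h1 i]
    have e2 : (M : ℝ)⁻¹ * ∑ j, ψ j = ∑ i, ∑ j, γ i j * ψ j := by
      rw [Finset.mul_sum, Finset.sum_comm]
      refine Finset.sum_congr rfl fun j _ => ?_
      rw [← Finset.sum_mul, h2 j]
    rw [e1, e2, ← Finset.sum_add_distrib]
    refine Finset.sum_congr rfl fun i _ => ?_
    rw [← Finset.sum_add_distrib]
  rw [key]
  refine Finset.sum_le_sum fun i _ => Finset.sum_le_sum fun j _ => ?_
  rw [← mul_add]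
  exact mul_le_mul_of_nonneg_left (hfe i j) (hpos i j)

lemma PS_bddBelow (hN : 0 < N) (hM : 0 < M) : BddBelow (PS N M C) := by
  refine ⟨-(∑ i, ∑ j, |C i j|), fun r hr => ?_⟩
  obtain ⟨γ, hpos, hrow, hcol, rfl⟩ := hr
  rw [← Finset.sum_neg_distrib]
  refine Finset.sum_le_sum fun i _ => ?_
  rw [← Finset.sum_neg_distrib]
  refine Finset.sum_le_sum fun j _ => ?_
  have hle1 : γ i j ≤ 1 := by
    have : γ i j ≤ ∑ j', γ i j' :=
      Finset.single_le_sum (fun j' _ => hpos i j') (Finset.mem_univ j)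
    have h1N : (1:ℝ)/N ≤ 1 := by
      rw [div_le_one (by exact_mod_cast hN)]
      exact_mod_cast hN
    linarith [hrow i]
  have : |γ i j * C i j| ≤ |C i j| := by
    rw [abs_mul, abs_of_nonneg (hpos i j)]
    nlinarith [abs_nonneg (C i j)]
  linarith [neg_abs_le (γ i j * C i j)]

lemma DS_bddAbove (hN : 0 < N) (hM : 0 < M) : BddAbove (DS N M C) := by
  obtain ⟨q, hq⟩ := PS_nonempty (C := C) hN hM
  exact ⟨q, fun r hr => weak hN hM hr hq⟩

lemma inf_le_sup (hN : 0 < N) (hM : 0 < M) : sInf (PS N M C) ≤ sSup (DS N M C) := by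
  classical
  have hNne : (N:ℝ) ≠ 0 := Nat.cast_ne_zero.2 hN.ne'
  have hMne : (M:ℝ) ≠ 0 := Nat.cast_ne_zero.2 hM.ne'
  have hPne := PS_nonempty (C := C) hN hM
  have hPbdd := PS_bddBelow (C := C) hN hM
  have hDbdd := DS_bddAbove (C := C) hN hM
  set V := sInf (PS N M C) with hV
  refine le_of_forall_pos_le_add fun ε hε => ?_
  suffices h : ∃ r ∈ DS N M C, V - ε < r by
    obtain ⟨r, hrD, hrlt⟩ := h
    have := le_csSup hDbdd hrD
    linarith
  set Tm : (Fin N → Fin M → ℝ) → (Fin N → ℝ) × (Fin M → ℝ) × ℝ := fun γ =>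
    (fun i => ∑ j, γ i j, fun j => ∑ i, γ i j, ∑ i, ∑ j, γ i j * C i j) with hTm
  set Box : Set (Fin N → Fin M → ℝ) := Set.Icc 0 1 with hBoxdef
  have hBoxmem : ∀ γ : Fin N → Fin M → ℝ,
      γ ∈ Box ↔ ((∀ i j, 0 ≤ γ i j) ∧ (∀ i j, γ i j ≤ 1)) := by
    intro γ
    simp [hBoxdef, Set.mem_Icc, Pi.le_def, forall_and]
  have hTcont : Continuous Tm := by
    refine Continuous.prodMk ?_ (Continuous.prodMk ?_ ?_)
    · exact continuous_pi fun i => continuous_finset_sum _ fun j _ =>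
        (continuous_apply j).comp (continuous_apply i)
    · exact continuous_pi fun j => continuous_finset_sum _ fun i _ =>
        (continuous_apply j).comp (continuous_apply i)
    · exact continuous_finset_sum _ fun i _ => continuous_finset_sum _ fun j _ =>
        ((continuous_apply_apply i j).mul continuous_const)
  have hcpt : IsCompact (Tm '' Box) := isCompact_Icc.image hTcont
  have hcvx : Convex ℝ (Tm '' Box) := by
    rintro x ⟨γ1, hγ1, rfl⟩ y ⟨γ2, hγ2, rfl⟩ a b ha hb hab
    rw [hBoxmem] at hγ1 hγ2
    refine ⟨a • γ1 + b • γ2, ?_, ?_⟩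
    · rw [hBoxmem]
      constructor
      · intro i j
        have h1 := mul_nonneg ha (hγ1.1 i j)
        have h2 := mul_nonneg hb (hγ2.1 i j)
        simp only [Pi.add_apply, Pi.smul_apply, smul_eq_mul]
        linarith
      · intro i j
        have h1 := mul_le_mul_of_nonneg_left (hγ1.2 i j) ha
        have h2 := mul_le_mul_of_nonneg_left (hγ2.2 i j) hb
        simp only [Pi.add_apply, Pi.smul_apply, smul_eq_mul]
        linarith
    · show Tm (a • γ1 + b • γ2) = a • Tm γ1 + b • Tm γ2
      rw [hTm]
      simp only [Prod.smul_mk, Prod.mk_add_mk]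
      refine congrArg₂ Prod.mk ?_ (congrArg₂ Prod.mk ?_ ?_)
      · funext i
        simp only [Pi.add_apply, Pi.smul_apply, smul_eq_mul, Finset.mul_sum,
          ← Finset.sum_add_distrib]
      · funext j
        simp only [Pi.add_apply, Pi.smul_apply, smul_eq_mul, Finset.mul_sum,
          ← Finset.sum_add_distrib]
      · simp only [smul_eq_mul, Finset.mul_sum, ← Finset.sum_add_distrib]
        refine Finset.sum_congr rfl fun i _ => ?_
        refine Finset.sum_congr rfl fun j _ => ?_
        simp only [Pi.add_apply, Pi.smul_apply, smul_eq_mul]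
        ring
  set p : (Fin N → ℝ) × (Fin M → ℝ) × ℝ := (fun _ => (N:ℝ)⁻¹, fun _ => (M:ℝ)⁻¹, V - ε) with hp
  have hpnot : p ∉ Tm '' Box := by
    rintro ⟨γ, hγ, heq⟩
    rw [hBoxmem] at hγ
    have hr : ∀ i, ∑ j, γ i j = (N:ℝ)⁻¹ := fun i => congrFun (congrArg Prod.fst heq) i
    have hc : ∀ j, ∑ i, γ i j = (M:ℝ)⁻¹ :=
      fun j => congrFun (congrArg Prod.fst (congrArg Prod.snd heq)) j
    have hcost : (∑ i, ∑ j, γ i j * C i j) = V - ε :=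
      congrArg (fun q : (Fin N → ℝ) × (Fin M → ℝ) × ℝ => q.2.2) heq
    have hmem : (∑ i, ∑ j, γ i j * C i j) ∈ PS N M C := by
      refine ⟨γ, hγ.1, fun i => ?_, fun j => ?_, rfl⟩
      · exact (hr i).trans (one_div _).symm
      · exact (hc j).trans (one_div _).symm
    have := csInf_le hPbdd hmem
    rw [hcost] at this
    linarith
  obtain ⟨f, u, hfp, hfb⟩ := geometric_hahn_banach_point_closed hcvx hcpt.isClosed hpnot
  set aa : Fin N → ℝ := fun i => f (Pi.single i 1, 0, 0) with haa
  set bb : Fin M → ℝ := fun j => f (0, Pi.single j 1, 0) with hbb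
  set θ : ℝ := f (0, 0, 1) with hθ
  have hsplit : ∀ (x : Fin N → ℝ) (y : Fin M → ℝ) (z : ℝ),
      f (x, y, z) = f (x, 0, 0) + f (0, y, 0) + z * θ := by
    intro x y z
    have h1 : ((x, y, z) : (Fin N → ℝ) × (Fin M → ℝ) × ℝ) = ((x, 0, 0) : (Fin N → ℝ) × (Fin M → ℝ) × ℝ) + ((0, y, 0) : (Fin N → ℝ) × (Fin M → ℝ) × ℝ)
        + (z • (((0:Fin N → ℝ), (0:Fin M → ℝ), (1:ℝ)) : (Fin N → ℝ) × (Fin M → ℝ) × ℝ)) := by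
      simp [Prod.ext_iff]
    rw [h1, map_add, map_add, map_smul, smul_eq_mul, hθ]
  have hsingle : ∀ (i : Fin N) (c : ℝ), (Pi.single i c : Fin N → ℝ) = c • (Pi.single i 1 : Fin N → ℝ) := by
    intro i c
    funext k
    by_cases hk : k = i
    · subst hk; simp
    · simp [Pi.single_apply, hk]
  have hsingleM : ∀ (j : Fin M) (c : ℝ), (Pi.single j c : Fin M → ℝ) = c • (Pi.single j 1 : Fin M → ℝ) := by
    intro j c
    funext k
    by_cases hk : k = j
    · subst hk; simp
    · simp [Pi.single_apply, hk]
  have hsum1 : ∀ x : Fin N → ℝ, f (x, 0, 0) = ∑ i, x i * aa i := by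
    intro x
    have h2 : ((x, (0:Fin M → ℝ), (0:ℝ)) : (Fin N → ℝ) × (Fin M → ℝ) × ℝ)
        = ∑ i, (x i) • (((Pi.single i 1 : Fin N → ℝ), (0:Fin M → ℝ), (0:ℝ)) : (Fin N → ℝ) × (Fin M → ℝ) × ℝ) := by
      simp only [Prod.ext_iff, Prod.fst_sum, Prod.snd_sum, Prod.smul_fst, Prod.smul_snd,
        smul_zero, Finset.sum_const, smul_eq_mul, mul_zero]
      refine ⟨?_, by simp, by simp⟩
      conv_lhs => rw [← Finset.univ_sum_single x]
      exact Finset.sum_congr rfl fun i _ => hsingle i (x i)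
    rw [h2, map_sum]
    exact Finset.sum_congr rfl fun i _ => by rw [map_smul, smul_eq_mul, haa]
  have hsum2 : ∀ y : Fin M → ℝ, f (0, y, 0) = ∑ j, y j * bb j := by
    intro y
    have h2 : (((0 : Fin N → ℝ), y, (0:ℝ)) : (Fin N → ℝ) × (Fin M → ℝ) × ℝ)
        = ∑ j, (y j) • (((0 : Fin N → ℝ), (Pi.single j 1 : Fin M → ℝ), (0:ℝ)) : (Fin N → ℝ) × (Fin M → ℝ) × ℝ) := by
      simp only [Prod.ext_iff, Prod.fst_sum, Prod.snd_sum, Prod.smul_fst, Prod.smul_snd,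
        smul_zero, Finset.sum_const, smul_eq_mul, mul_zero]
      refine ⟨by simp, ?_, by simp⟩
      conv_lhs => rw [← Finset.univ_sum_single y]
      exact Finset.sum_congr rfl fun j _ => hsingleM j (y j)
    rw [h2, map_sum]
    exact Finset.sum_congr rfl fun j _ => by rw [map_smul, smul_eq_mul, hbb]
  -- value of f at p
  set A := ∑ i, aa i with hA
  set B := ∑ j, bb j with hB
  have hfpval : f p = (N:ℝ)⁻¹ * A + (M:ℝ)⁻¹ * B + (V - ε) * θ := by
    rw [hp, hsplit, hsum1, hsum2, hA, hB, Finset.mul_sum, Finset.mul_sum]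
  -- positivity of θ
  have hθpos : 0 < θ := by
    set γbar : Fin N → Fin M → ℝ := fun _ _ => ((N:ℝ) * M)⁻¹ with hγbar
    have hNM1 : (1:ℝ) ≤ (N:ℝ) * M := by
      have : (1:ℝ) ≤ (N:ℝ) := by exact_mod_cast hN
      have h2 : (1:ℝ) ≤ (M:ℝ) := by exact_mod_cast hM
      nlinarith
    have hbox : γbar ∈ Box := by
      rw [hBoxmem]
      constructor
      · intro i j; positivity
      · intro i j
        show ((N:ℝ) * M)⁻¹ ≤ 1
        rw [inv_le_one_iff₀]
        right; exact hNM1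
    have hrow : ∀ i : Fin N, ∑ j, γbar i j = (N:ℝ)⁻¹ := by
      intro i
      rw [hγbar]
      rw [Finset.sum_const, Finset.card_univ, Fintype.card_fin, nsmul_eq_mul]
      field_simp
      try ring
    have hcol : ∀ j : Fin M, ∑ i, γbar i j = (M:ℝ)⁻¹ := by
      intro j
      rw [hγbar]
      rw [Finset.sum_const, Finset.card_univ, Fintype.card_fin, nsmul_eq_mul]
      field_simp
      try ring
    set qbar := ∑ i, ∑ j, γbar i j * C i j with hqbar
    have hqmem : qbar ∈ PS N M C := by
      refine ⟨γbar, fun i j => by positivity, fun i => ?_, fun j => ?_, rfl⟩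
      · exact (hrow i).trans (one_div _).symm
      · exact (hcol j).trans (one_div _).symm
    have hqV : V ≤ qbar := csInf_le hPbdd hqmem
    have hTbar : Tm γbar = ((fun _ => (N:ℝ)⁻¹ : Fin N → ℝ), (fun _ => (M:ℝ)⁻¹ : Fin M → ℝ), qbar) := by
      simp only [hTm, Prod.mk.injEq]
      exact ⟨funext hrow, funext hcol, hqbar.symm⟩
    have hub : u < f (Tm γbar) := hfb _ ⟨γbar, hbox, rfl⟩
    have hv1 : f (Tm γbar) = (N:ℝ)⁻¹ * A + (M:ℝ)⁻¹ * B + qbar * θ := by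
      rw [hTbar, hsplit, hsum1, hsum2, hA, hB, Finset.mul_sum, Finset.mul_sum]
    have key : (qbar - (V - ε)) * θ > 0 := by
      rw [hfpval] at hfp
      rw [hv1] at hub
      nlinarith
    by_contra hcon
    push_neg at hcon
    have : (qbar - (V - ε)) * θ ≤ 0 :=
      mul_nonpos_of_nonneg_of_nonpos (by linarith) hcon
    linarith
  have hθne : θ ≠ 0 := ne_of_gt hθpos
  have hinv : 0 < θ⁻¹ := inv_pos.2 hθpos
  -- the dual pair
  set φ : Fin N → ℝ := fun i => -(aa i) * θ⁻¹ + u * θ⁻¹ with hφ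
  set ψ : Fin M → ℝ := fun j => -(bb j) * θ⁻¹ with hψ
  have hfeas : ∀ i j, φ i + ψ j ≤ C i j := by
    intro i j
    -- from the indicator matrix
    set γ0 : Fin N → Fin M → ℝ := fun i' j' => (if i' = i then (1:ℝ) else 0) * (if j' = j then (1:ℝ) else 0) with hγ0
    have hbox0 : γ0 ∈ Box := by
      rw [hBoxmem]
      constructor
      · intro i' j'; rw [hγ0]; positivity
      · intro i' j'
        rw [hγ0]
        by_cases h1 : i' = i <;> by_cases h2 : j' = j <;> simp [h1, h2]
    have hT0 : Tm γ0 = ((Pi.single i 1 : Fin N → ℝ), (Pi.single j 1 : Fin M → ℝ), C i j) := by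
      simp only [hTm, Prod.mk.injEq]
      refine ⟨funext fun i' => ?_, funext fun j' => ?_, ?_⟩
      · rw [hγ0]
        by_cases h1 : i' = i
        · subst h1; simp [Pi.single_apply]
        · simp [h1, Pi.single_apply]
      · rw [hγ0]
        by_cases h2 : j' = j
        · subst h2; simp [Pi.single_apply]
        · simp [h2, Pi.single_apply]
      · rw [hγ0]
        rw [Finset.sum_eq_single i]
        · rw [Finset.sum_eq_single j] <;> simp +contextual
        · intro i' _ hi'; simp [hi']
        · simp
    have hub : u < f (Tm γ0) := hfb _ ⟨γ0, hbox0, rfl⟩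
    have hval : f (Tm γ0) = aa i + bb j + C i j * θ := by
      rw [hT0, hsplit, hsum1, hsum2]
      simp [Pi.single_apply, Finset.sum_ite_eq']
    rw [hval] at hub
    have h2 := mul_lt_mul_of_pos_right hub hinv
    have h3 : (aa i + bb j + C i j * θ) * θ⁻¹
        = aa i * θ⁻¹ + bb j * θ⁻¹ + C i j * (θ * θ⁻¹) := by ring
    rw [h3, mul_inv_cancel₀ hθne, mul_one] at h2
    rw [hφ, hψ]
    dsimp only
    linarith
  -- the dual value
  refine ⟨(N:ℝ)⁻¹ * ∑ i, φ i + (M:ℝ)⁻¹ * ∑ j, ψ j, ⟨φ, ψ, hfeas, rfl⟩, ?_⟩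
  have hsφ : ∑ i, φ i = -A * θ⁻¹ + N * (u * θ⁻¹) := by
    rw [hφ]
    rw [Finset.sum_add_distrib, Finset.sum_const, Finset.card_univ, Fintype.card_fin,
      nsmul_eq_mul, ← Finset.sum_mul, Finset.sum_neg_distrib, hA]
  have hsψ : ∑ j, ψ j = -B * θ⁻¹ := by
    rw [hψ, ← Finset.sum_mul, Finset.sum_neg_distrib, hB]
  rw [hsφ, hsψ]
  -- use f p < u
  rw [hfpval] at hfp
  have h2 := mul_lt_mul_of_pos_right hfp hinv
  have h3 : ((N:ℝ)⁻¹ * A + (M:ℝ)⁻¹ * B + (V - ε) * θ) * θ⁻¹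
      = (N:ℝ)⁻¹ * (A * θ⁻¹) + (M:ℝ)⁻¹ * (B * θ⁻¹) + (V - ε) * (θ * θ⁻¹) := by ring
  rw [h3, mul_inv_cancel₀ hθne, mul_one] at h2
  have h4 : (N:ℝ)⁻¹ * (-A * θ⁻¹ + N * (u * θ⁻¹)) + (M:ℝ)⁻¹ * (-B * θ⁻¹)
      = -((N:ℝ)⁻¹ * (A * θ⁻¹)) + ((N:ℝ)⁻¹ * N) * (u * θ⁻¹) - (M:ℝ)⁻¹ * (B * θ⁻¹) := by ring
  rw [h4, inv_mul_cancel₀ hNne, one_mul]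
  linarith

lemma part2 (hN : 0 < N) (hM : 0 < M) (heq : sInf (PS N M C) = sSup (DS N M C)) :
    ∃ ψ : Fin M → ℝ, sInf (PS N M C)
      = (N : ℝ)⁻¹ * ∑ i, (⨅ j, (C i j - ψ j)) + (M : ℝ)⁻¹ * ∑ j, ψ j := by
  classical
  haveI : Nonempty (Fin M) := ⟨⟨0, hM⟩⟩
  haveI : Nonempty (Fin N) := ⟨⟨0, hN⟩⟩
  have hNne : (N:ℝ) ≠ 0 := Nat.cast_ne_zero.2 hN.ne'
  have hMne : (M:ℝ) ≠ 0 := Nat.cast_ne_zero.2 hM.ne'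
  have hNuniv : (Finset.univ : Finset (Fin N)).Nonempty := Finset.univ_nonempty
  have hMuniv : (Finset.univ : Finset (Fin M)).Nonempty := Finset.univ_nonempty
  set ct : (Fin M → ℝ) → Fin N → ℝ :=
    fun ψ i => Finset.univ.inf' hMuniv fun j => C i j - ψ j with hct
  set g : (Fin M → ℝ) → ℝ :=
    fun ψ => (N : ℝ)⁻¹ * ∑ i, ct ψ i + (M : ℝ)⁻¹ * ∑ j, ψ j with hg
  have hctle : ∀ ψ i j, ct ψ i ≤ C i j - ψ j :=
    fun ψ i j => Finset.inf'_le _ (Finset.mem_univ j)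
  have hlect : ∀ (ψ) (i) (x : ℝ), (∀ j, x ≤ C i j - ψ j) → x ≤ ct ψ i :=
    fun ψ i x h => Finset.le_inf' _ _ fun j _ => h j
  have hgmem : ∀ ψ, g ψ ∈ DS N M C :=
    fun ψ => ⟨ct ψ, ψ, fun i j => by have := hctle ψ i j; linarith, rfl⟩
  set Dc := ∑ i, ∑ j, |C i j| with hDc
  have hDc0 : (0:ℝ) ≤ Dc :=
    Finset.sum_nonneg fun _ _ => Finset.sum_nonneg fun _ _ => abs_nonneg _
  have hCDc : ∀ i j, |C i j| ≤ Dc := by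
    intro i j
    calc |C i j| ≤ ∑ j', |C i j'| :=
          Finset.single_le_sum (f := fun j' => |C i j'|)
            (fun j' _ => abs_nonneg _) (Finset.mem_univ j)
      _ ≤ Dc := Finset.single_le_sum (f := fun i' => ∑ j', |C i' j'|)
          (fun i' _ => Finset.sum_nonneg fun j' _ => abs_nonneg _) (Finset.mem_univ i)
  set K : Set (Fin M → ℝ) := Set.Icc (fun _ => -(2*Dc)) (fun _ => 2*Dc) with hK
  have hKc : IsCompact K := isCompact_Icc
  have hKne : K.Nonempty :=
    ⟨fun _ => 0, Set.mem_Icc.2 ⟨fun j => by dsimp; linarith, fun j => by dsimp; linarith⟩⟩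
  have hgcont : Continuous g := by
    rw [hg]
    apply Continuous.add
    · apply Continuous.mul continuous_const
      apply continuous_finset_sum
      intro i _
      exact Continuous.finset_inf'_apply hMuniv
        fun j _ => continuous_const.sub (continuous_apply j)
    · exact continuous_const.mul (continuous_finset_sum _ fun j _ => continuous_apply j)
  obtain ⟨ψs, hψsK, hmax⟩ := hKc.exists_isMaxOn hKne hgcont.continuousOn
  have hmax' : ∀ σ ∈ K, g σ ≤ g ψs := fun σ hσ => hmax hσ
  have hdom : ∀ r ∈ DS N M C, r ≤ g ψs := by
    rintro r ⟨φ, ψ, hfe, rfl⟩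
    have hNinv : (0:ℝ) ≤ (N:ℝ)⁻¹ := by positivity
    have hMinv : (0:ℝ) ≤ (M:ℝ)⁻¹ := by positivity
    have h1 : (N : ℝ)⁻¹ * ∑ i, φ i + (M : ℝ)⁻¹ * ∑ j, ψ j ≤ g ψ := by
      rw [hg]
      have hφct : ∀ i, φ i ≤ ct ψ i :=
        fun i => hlect ψ i (φ i) fun j => by linarith [hfe i j]
      have hsum : ∑ i, φ i ≤ ∑ i, ct ψ i := Finset.sum_le_sum fun i _ => hφct i
      have := mul_le_mul_of_nonneg_left hsum hNinv
      dsimp only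
      linarith
    set φ1 : Fin N → ℝ := ct ψ with hφ1
    set ψ' : Fin M → ℝ := fun j => Finset.univ.inf' hNuniv fun i => C i j - φ1 i with hψ'
    have hψ'ge : ∀ j, ψ j ≤ ψ' j :=
      fun j => Finset.le_inf' _ _ fun i _ => by linarith [hctle ψ i j]
    have hψ'le : ∀ i j, ψ' j ≤ C i j - φ1 i :=
      fun i j => Finset.inf'_le _ (Finset.mem_univ i)
    have hctψ' : ∀ i, ct ψ' i = φ1 i := by
      intro i
      apply le_antisymm
      · obtain ⟨j1, _, hj1⟩ := Finset.exists_mem_eq_inf' hMuniv (fun j => C i j - ψ j)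
        have e1 : φ1 i = C i j1 - ψ j1 := hj1
        have e2 : ct ψ' i ≤ C i j1 - ψ' j1 := hctle ψ' i j1
        have := hψ'ge j1
        linarith
      · exact hlect ψ' i (φ1 i) fun j => by linarith [hψ'le i j]
    have h2 : g ψ ≤ g ψ' := by
      rw [hg]
      dsimp only
      have e1 : ∑ i, ct ψ' i = ∑ i, ct ψ i :=
        Finset.sum_congr rfl fun i _ => hctψ' i
      have hs2 : ∑ j, ψ j ≤ ∑ j, ψ' j := Finset.sum_le_sum fun j _ => hψ'ge j
      have := mul_le_mul_of_nonneg_left hs2 hMinv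
      rw [e1]
      linarith
    set c : ℝ := ψ' ⟨0, hM⟩ with hcdef
    set σ : Fin M → ℝ := fun j => ψ' j - c with hσ
    have hσapp : ∀ j, σ j = ψ' j - c := fun j => rfl
    have hctσ : ∀ i, ct σ i = ct ψ' i + c := by
      intro i
      apply le_antisymm
      · obtain ⟨j1, _, hj1⟩ := Finset.exists_mem_eq_inf' hMuniv (fun j => C i j - ψ' j)
        have e1 : ct ψ' i = C i j1 - ψ' j1 := hj1
        have e2 : ct σ i ≤ C i j1 - σ j1 := hctle σ i j1
        rw [hσapp j1] at e2
        linarith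
      · refine hlect σ i _ fun j => ?_
        have := hctle ψ' i j
        rw [hσapp j]
        linarith
    have hσK : σ ∈ K := by
      rw [hK]
      refine Set.mem_Icc.2 ⟨fun j => ?_, fun j => ?_⟩
      · show -(2*Dc) ≤ σ j
        obtain ⟨i1, _, hi1⟩ := Finset.exists_mem_eq_inf' hNuniv (fun i => C i j - φ1 i)
        have e1 : ψ' j = C i1 j - φ1 i1 := hi1
        have e2 : c ≤ C i1 ⟨0, hM⟩ - φ1 i1 := hψ'le i1 ⟨0, hM⟩
        have a1 := hCDc i1 j
        have a2 := hCDc i1 ⟨0, hM⟩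
        have b1 := neg_abs_le (C i1 j)
        have b2 := le_abs_self (C i1 ⟨0, hM⟩)
        rw [hσapp j]
        linarith
      · show σ j ≤ 2*Dc
        obtain ⟨i2, _, hi2⟩ := Finset.exists_mem_eq_inf' hNuniv (fun i => C i ⟨0, hM⟩ - φ1 i)
        have e1 : c = C i2 ⟨0, hM⟩ - φ1 i2 := hi2
        have e2 : ψ' j ≤ C i2 j - φ1 i2 := hψ'le i2 j
        have a1 := hCDc i2 j
        have a2 := hCDc i2 ⟨0, hM⟩
        have b1 := le_abs_self (C i2 j)
        have b2 := neg_abs_le (C i2 ⟨0, hM⟩)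
        rw [hσapp j]
        linarith
    have h3 : g σ = g ψ' := by
      rw [hg]
      dsimp only
      have e1 : ∑ i, ct σ i = ∑ i, ct ψ' i + N * c := by
        calc ∑ i, ct σ i = ∑ i, (ct ψ' i + c) := Finset.sum_congr rfl fun i _ => hctσ i
          _ = ∑ i, ct ψ' i + N * c := by
            rw [Finset.sum_add_distrib, Finset.sum_const, Finset.card_univ,
              Fintype.card_fin, nsmul_eq_mul]
      have e2 : ∑ j, σ j = ∑ j, ψ' j - M * c := by
        calc ∑ j, σ j = ∑ j, (ψ' j - c) := Finset.sum_congr rfl fun j _ => hσapp j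
          _ = ∑ j, ψ' j - M * c := by
            rw [Finset.sum_sub_distrib, Finset.sum_const, Finset.card_univ,
              Fintype.card_fin, nsmul_eq_mul]
      rw [e1, e2]
      field_simp
      ring
    have h4 : g σ ≤ g ψs := hmax' σ hσK
    exact h1.trans (h2.trans (h3.symm.trans_le h4))
  refine ⟨ψs, ?_⟩
  have hfin : g ψs = sInf (PS N M C) := by
    have hle : sSup (DS N M C) ≤ g ψs := csSup_le (DS_nonempty hN hM) hdom
    have hge : g ψs ≤ sSup (DS N M C) := le_csSup (DS_bddAbove hN hM) (hgmem ψs)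
    rw [heq]
    linarith
  have hconv : ∀ i, ct ψs i = ⨅ j, (C i j - ψs j) :=
    fun i => Finset.inf'_univ_eq_ciInf fun j => C i j - ψs j
  rw [← hfin, hg]
  dsimp only
  rw [Finset.sum_congr rfl fun i _ => hconv i]

end DSD


/-- Strong duality for the discrete transportation problem: the primal LP value over
feasible coupling matrices equals the supremum of the dual objective over feasible dual
pairs `(φ,ψ)`, and at the optimum one may take `φ_i = ψ^c(x_i) = min_j (C_{ij} - ψ_j)`. -/
theorem discrete_strong_duality (N M : ℕ) (hN : 0 < N) (hM : 0 < M)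
    (C : Fin N → Fin M → ℝ) :
    sInf {r : ℝ | ∃ γ : Fin N → Fin M → ℝ,
        (∀ i j, 0 ≤ γ i j) ∧ (∀ i, ∑ j, γ i j = 1 / N) ∧ (∀ j, ∑ i, γ i j = 1 / M) ∧
        r = ∑ i, ∑ j, γ i j * C i j} =
      sSup {r : ℝ | ∃ φ : Fin N → ℝ, ∃ ψ : Fin M → ℝ,
        (∀ i j, φ i + ψ j ≤ C i j) ∧
        r = (N : ℝ)⁻¹ * ∑ i, φ i + (M : ℝ)⁻¹ * ∑ j, ψ j} ∧
    ∃ ψ : Fin M → ℝ,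
      sInf {r : ℝ | ∃ γ : Fin N → Fin M → ℝ,
          (∀ i j, 0 ≤ γ i j) ∧ (∀ i, ∑ j, γ i j = 1 / N) ∧ (∀ j, ∑ i, γ i j = 1 / M) ∧
          r = ∑ i, ∑ j, γ i j * C i j} =
        (N : ℝ)⁻¹ * ∑ i, (⨅ j, (C i j - ψ j)) + (M : ℝ)⁻¹ * ∑ j, ψ j := by
  have heq : sInf (DSD.PS N M C) = sSup (DSD.DS N M C) :=
    le_antisymm (DSD.inf_le_sup hN hM)
      (le_csInf (DSD.PS_nonempty hN hM) fun q hq =>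
        csSup_le (DSD.DS_nonempty hN hM) fun r hr => DSD.weak hN hM hr hq)
  exact ⟨heq, DSD.part2 hN hM heq⟩
end
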